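/- Let ρ : ℝ^{2d} → Mat_{2d}(ℝ) be smooth with ρ(x) η ρ(x)^T = η pointwise. Define the frame fields ê_M : ℝ^{2d} → ℝ^{2d} by (ê_M)^I := ρ^I{}_M. Then the untwisted C-bracket of the frame fields is again a combination of frame fields with coefficients given by the DFT fluxes: [[ê_M, ê_N]]^I = η^{PQ} T̂_{MNP} ρ^I{}_Q, where T̂_{MNP} := 3 η_{IK} ρ^K{}_{[M} ∂^I ρ^L{}_{N} η_{LR} ρ^R{}_{P]} and [MNP] denotes weight-one antisymmetrization (average over signed permutations of M, N, P; the index L is not antisymmetrized). -/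

import Mathlib

open scoped BigOperators

noncomputable section

/-- Doubled index set: `I = 1,…,2d`, realized as `Fin d ⊕ Fin d`. -/
abbrev DIdx (d : ℕ) := Fin d ⊕ Fin d

/-- The doubled space `ℝ^{2d}`. -/
abbrev DSpace (d : ℕ) := DIdx d → ℝ

/-- The constant O(d,d)-invariant metric `η = ((0,1_d),(1_d,0))`; numerically `η⁻¹ = η`. -/
def eta {d : ℕ} : DIdx d → DIdx d → ℝ
  | Sum.inl i, Sum.inr j => if i = j then 1 else 0
  | Sum.inr i, Sum.inl j => if i = j then 1 else 0
  | _, _ => 0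

/-- Partial derivative `∂_I f (x)`. -/
def pd {d : ℕ} (f : DSpace d → ℝ) (I : DIdx d) (x : DSpace d) : ℝ :=
  fderiv ℝ f x (Pi.single I 1)

/-- Lowered components `A_I := η_{IJ} A^J`. -/
def low {d : ℕ} (A : DSpace d → DSpace d) (I : DIdx d) : DSpace d → ℝ :=
  fun x => ∑ J, eta I J * A x J

/-- Raised derivative `∂^I f := η^{IJ} ∂_J f`. -/
def pdU {d : ℕ} (f : DSpace d → ℝ) (I : DIdx d) (x : DSpace d) : ℝ :=
  ∑ J, eta I J * pd f J x

/-- The flat untwisted C-bracket `[[A,B]]^J := A^K ∂_K B^J − ½ A^K ∂^J B_K − (A ↔ B)`. -/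
def cbC {d : ℕ} (A B : DSpace d → DSpace d) (J : DIdx d) (x : DSpace d) : ℝ :=
  ∑ K, (A x K * pd (fun y => B y J) K x - (1/2) * A x K * pdU (low B K) J x
      - B x K * pd (fun y => A y J) K x + (1/2) * B x K * pdU (low A K) J x)

/-- Weight-one antisymmetrization over three indices. -/
def asym3 {α : Type*} (G : α → α → α → ℝ) (a b c : α) : ℝ :=
  (1/6) * (G a b c - G a c b + G b c a - G b a c + G c a b - G c b a)

/-- The DFT fluxes `T̂_{MNP} := 3 η_{IK} ρ^K{}_{[M} ∂^I ρ^L{}_{N} η_{LR} ρ^R{}_{P]}`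
(weight-one antisymmetrization over `M, N, P`; the index `L` is not antisymmetrized). -/
def dftFlux {d : ℕ} (ρ : DSpace d → DIdx d → DIdx d → ℝ)
    (M N P : DIdx d) (x : DSpace d) : ℝ :=
  3 * asym3 (fun a b c => ∑ I, ∑ K, ∑ L, ∑ R,
      eta I K * ρ x K a * pdU (fun y => ρ y L b) I x * eta L R * ρ x R c) M N P


variable {d : ℕ}

lemma eta_eq (I J : DIdx d) : eta I J = if J = Sum.swap I then (1:ℝ) else 0 := by
  cases I <;> cases J <;> simp [eta, Sum.swap, eq_comm]

lemma eta_swap_left (a b : DIdx d) : eta (Sum.swap a) b = if a = b then (1:ℝ) else 0 := by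
  cases a <;> cases b <;> simp [eta, Sum.swap, eq_comm]

lemma eta_swap_right (a b : DIdx d) : eta a (Sum.swap b) = if a = b then (1:ℝ) else 0 := by
  cases a <;> cases b <;> simp [eta, Sum.swap, eq_comm]

lemma sum_eta_mul (I : DIdx d) (f : DIdx d → ℝ) : ∑ J, eta I J * f J = f (Sum.swap I) := by
  simp [eta_eq, ite_mul]

lemma sum_swap_reindex (f : DIdx d → ℝ) : ∑ K, f (Sum.swap K) = ∑ K, f K :=
  Fintype.sum_equiv (Equiv.sumComm _ _) _ _ (fun K => rfl)

def Sq (r : DIdx d → DIdx d → ℝ) (D : DIdx d → DIdx d → DIdx d → ℝ) (b c K : DIdx d) : ℝ :=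
  ∑ L, D L b K * r (Sum.swap L) c

def Fq (r : DIdx d → DIdx d → ℝ) (D : DIdx d → DIdx d → DIdx d → ℝ) (a b c : DIdx d) : ℝ :=
  ∑ K, r K a * Sq r D b c K

section key
variable (r : DIdx d → DIdx d → ℝ) (D : DIdx d → DIdx d → DIdx d → ℝ)

lemma Sq_anti (h4 : ∀ a b A, ∑ K, (D K a A * r (Sum.swap K) b + r K a * D (Sum.swap K) b A) = 0)
    (b c K : DIdx d) : Sq r D b c K = - Sq r D c b K := by
  have h := h4 b c K
  rw [Finset.sum_add_distrib] at h
  have h2 : ∑ L, r L b * D (Sum.swap L) c K = Sq r D c b K := by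
    rw [Sq]
    rw [← sum_swap_reindex (fun L => r L b * D (Sum.swap L) c K)]
    refine Finset.sum_congr rfl fun L _ => by simp [mul_comm]
  simp only [Sq] at h2 ⊢
  linarith

lemma Fq_anti (h4 : ∀ a b A, ∑ K, (D K a A * r (Sum.swap K) b + r K a * D (Sum.swap K) b A) = 0)
    (a b c : DIdx d) : Fq r D a b c = - Fq r D a c b := by
  simp only [Fq, Sq_anti r D h4 b c, mul_neg, Finset.sum_neg_distrib]

lemma P1 (h1 : ∀ K L, ∑ I', r K I' * r L (Sum.swap I') = eta K L) (M N I : DIdx d) :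
    ∑ P, Fq r D M N P * r I (Sum.swap P) = ∑ K, r K M * D I N K := by
  simp only [Fq, Sq, Finset.sum_mul, Finset.mul_sum]
  rw [Finset.sum_comm]
  refine Finset.sum_congr rfl fun K _ => ?_
  rw [Finset.sum_comm]
  calc ∑ y, ∑ x, r K M * (D y N K * r (Sum.swap y) x) * r I (Sum.swap x)
      = ∑ y, (r K M * D y N K) * eta (Sum.swap y) I := by
        refine Finset.sum_congr rfl fun y _ => ?_
        rw [← h1 (Sum.swap y) I, Finset.mul_sum]
        exact Finset.sum_congr rfl fun x _ => by ring
    _ = r K M * D I N K := by simp [eta_swap_left]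

lemma sum_swap (f : DIdx d → ℝ) : ∑ K, f K = ∑ K, f (Sum.swap K) :=
  (sum_swap_reindex f).symm

lemma eta_eq' (I J : DIdx d) : eta I J = if I = Sum.swap J then (1:ℝ) else 0 := by
  cases I <;> cases J <;> simp [eta, Sum.swap, eq_comm]

lemma P3 (h1 : ∀ K L, ∑ I', r K I' * r L (Sum.swap I') = eta K L) (a b I : DIdx d) :
    ∑ P, Fq r D P a b * r I (Sum.swap P) = Sq r D a b (Sum.swap I) := by
  simp only [Fq, Finset.sum_mul]
  rw [Finset.sum_comm]
  calc ∑ K, ∑ P, (r K P * Sq r D a b K) * r I (Sum.swap P)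
      = ∑ K, eta K I * Sq r D a b K := by
        refine Finset.sum_congr rfl fun K _ => ?_
        rw [← h1 K I, Finset.sum_mul]
        exact Finset.sum_congr rfl fun P _ => by ring
    _ = Sq r D a b (Sum.swap I) := by simp [eta_eq', ite_mul]

lemma P2 (h2 : ∀ a b, ∑ K, r K a * r (Sum.swap K) b = eta a b)
    (h3 : ∀ K L A, ∑ I', (D K I' A * r L (Sum.swap I') + r K I' * D L (Sum.swap I') A) = 0)
    (a c I : DIdx d) :
    ∑ P, Fq r D a P c * r I (Sum.swap P) = - ∑ K, r K a * D I c K := by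
  simp only [Fq, Sq, Finset.sum_mul, Finset.mul_sum]
  rw [Finset.sum_comm, ← Finset.sum_neg_distrib]
  refine Finset.sum_congr rfl fun K _ => ?_
  rw [Finset.sum_comm]
  have hP : ∀ L, ∑ P, D L P K * r I (Sum.swap P) = - ∑ P, r L (Sum.swap P) * D I P K := by
    intro L
    have h := h3 L I K
    rw [Finset.sum_add_distrib] at h
    have h' : ∑ P, r L P * D I (Sum.swap P) K = ∑ P, r L (Sum.swap P) * D I P K := by
      rw [sum_swap (fun P => r L P * D I (Sum.swap P) K)]
      simp only [Sum.swap_swap]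
    linarith
  have hL : ∀ P, ∑ L, r (Sum.swap L) c * r L (Sum.swap P) = eta c (Sum.swap P) := by
    intro P
    rw [sum_swap (fun L => r (Sum.swap L) c * r L (Sum.swap P))]
    simp only [Sum.swap_swap]
    exact h2 c (Sum.swap P)
  calc ∑ L, ∑ P, r K a * (D L P K * r (Sum.swap L) c) * r I (Sum.swap P)
      = ∑ L, (r K a * r (Sum.swap L) c) * ∑ P, D L P K * r I (Sum.swap P) := by
        refine Finset.sum_congr rfl fun L _ => ?_
        rw [Finset.mul_sum]
        exact Finset.sum_congr rfl fun P _ => by ring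
    _ = ∑ L, ∑ P, -((r K a * D I P K) * (r (Sum.swap L) c * r L (Sum.swap P))) := by
        refine Finset.sum_congr rfl fun L _ => ?_
        rw [hP L, mul_neg, Finset.mul_sum, ← Finset.sum_neg_distrib]
        exact Finset.sum_congr rfl fun P _ => by ring
    _ = ∑ P, ∑ L, -((r K a * D I P K) * (r (Sum.swap L) c * r L (Sum.swap P))) :=
        Finset.sum_comm
    _ = ∑ P, -((r K a * D I P K) * eta c (Sum.swap P)) := by
        refine Finset.sum_congr rfl fun P _ => ?_
        rw [Finset.sum_neg_distrib, ← Finset.mul_sum, hL P]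
    _ = -(r K a * D I c K) := by simp [eta_swap_right]

lemma key (h1 : ∀ K L, ∑ I', r K I' * r L (Sum.swap I') = eta K L)
    (h2 : ∀ a b, ∑ K, r K a * r (Sum.swap K) b = eta a b)
    (h3 : ∀ K L A, ∑ I', (D K I' A * r L (Sum.swap I') + r K I' * D L (Sum.swap I') A) = 0)
    (h4 : ∀ a b A, ∑ K, (D K a A * r (Sum.swap K) b + r K a * D (Sum.swap K) b A) = 0)
    (M N I : DIdx d) :
    ∑ K, (r K M * D I N K - (1/2) * r K M * D (Sum.swap K) N (Sum.swap I)
        - r K N * D I M K + (1/2) * r K N * D (Sum.swap K) M (Sum.swap I))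
    = ∑ P, ((1/2) * (Fq r D M N P - Fq r D M P N + Fq r D N P M - Fq r D N M P
        + Fq r D P M N - Fq r D P N M)) * r I (Sum.swap P) := by
  have hS := Sq_anti r D h4
  have hA : ∑ K, r K M * D (Sum.swap K) N (Sum.swap I) = - Sq r D M N (Sum.swap I) := by
    rw [sum_swap (fun K => r K M * D (Sum.swap K) N (Sum.swap I))]
    simp only [Sum.swap_swap]
    calc ∑ K, r (Sum.swap K) M * D K N (Sum.swap I)
        = Sq r D N M (Sum.swap I) := by
          rw [Sq]; exact Finset.sum_congr rfl fun K _ => mul_comm _ _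
      _ = - Sq r D M N (Sum.swap I) := hS N M _
  have hB : ∑ K, r K N * D (Sum.swap K) M (Sum.swap I) = Sq r D M N (Sum.swap I) := by
    rw [sum_swap (fun K => r K N * D (Sum.swap K) M (Sum.swap I))]
    simp only [Sum.swap_swap]
    rw [Sq]; exact Finset.sum_congr rfl fun K _ => mul_comm _ _
  have e1 := P1 r D h1 M N I
  have e2 := P2 r D h2 h3 N M I
  have e3 := P3 r D h1 M N I
  have e4 := P3 r D h1 N M I
  have hRHS : ∑ P, ((1/2) * (Fq r D M N P - Fq r D M P N + Fq r D N P M - Fq r D N M P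
        + Fq r D P M N - Fq r D P N M)) * r I (Sum.swap P)
      = (∑ K, r K M * D I N K) - (∑ K, r K N * D I M K) + Sq r D M N (Sum.swap I) := by
    calc ∑ P, ((1/2) * (Fq r D M N P - Fq r D M P N + Fq r D N P M - Fq r D N M P
          + Fq r D P M N - Fq r D P N M)) * r I (Sum.swap P)
        = ∑ P, ((Fq r D M N P * r I (Sum.swap P) + Fq r D N P M * r I (Sum.swap P))
            + ((1/2) * (Fq r D P M N * r I (Sum.swap P))
              - (1/2) * (Fq r D P N M * r I (Sum.swap P)))) := by
          refine Finset.sum_congr rfl fun P _ => ?_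
          rw [Fq_anti r D h4 M P N, Fq_anti r D h4 N M P]
          ring
      _ = (∑ P, Fq r D M N P * r I (Sum.swap P) + ∑ P, Fq r D N P M * r I (Sum.swap P))
            + ((1/2) * ∑ P, Fq r D P M N * r I (Sum.swap P)
              - (1/2) * ∑ P, Fq r D P N M * r I (Sum.swap P)) := by
          rw [Finset.sum_add_distrib, Finset.sum_add_distrib, Finset.sum_sub_distrib,
            ← Finset.mul_sum, ← Finset.mul_sum]
      _ = (∑ K, r K M * D I N K) - (∑ K, r K N * D I M K) + Sq r D M N (Sum.swap I) := by
          rw [e1, e2, e3, e4, hS N M (Sum.swap I)]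
          ring
  rw [hRHS]
  calc ∑ K, (r K M * D I N K - (1/2) * r K M * D (Sum.swap K) N (Sum.swap I)
        - r K N * D I M K + (1/2) * r K N * D (Sum.swap K) M (Sum.swap I))
      = (∑ K, r K M * D I N K - ∑ K, r K N * D I M K)
        + ((1/2) * ∑ K, r K N * D (Sum.swap K) M (Sum.swap I)
          - (1/2) * ∑ K, r K M * D (Sum.swap K) N (Sum.swap I)) := by
        rw [Finset.mul_sum, Finset.mul_sum, ← Finset.sum_sub_distrib,
          ← Finset.sum_sub_distrib, ← Finset.sum_add_distrib]
        exact Finset.sum_congr rfl fun K _ => by ring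
    _ = (∑ K, r K M * D I N K) - (∑ K, r K N * D I M K) + Sq r D M N (Sum.swap I) := by
        rw [hA, hB]; ring

end key

lemma pd_const (c : ℝ) (A : DIdx d) (x : DSpace d) : pd (fun _ => c) A x = 0 := by
  simp [pd]

lemma pd_sum_mul {ι : Type*} [Fintype ι] (f g : ι → DSpace d → ℝ) (x : DSpace d)
    (hf : ∀ i, DifferentiableAt ℝ (f i) x) (hg : ∀ i, DifferentiableAt ℝ (g i) x)
    (A : DIdx d) :
    pd (fun y => ∑ i, f i y * g i y) A x
      = ∑ i, (pd (f i) A x * g i x + f i x * pd (g i) A x) := by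
  have H : HasFDerivAt (fun y => ∑ i, f i y * g i y)
      (∑ i, (f i x • fderiv ℝ (g i) x + g i x • fderiv ℝ (f i) x)) x := by
    refine HasFDerivAt.fun_sum fun i _ => ?_
    exact ((hf i).hasFDerivAt.mul (hg i).hasFDerivAt)
  unfold pd
  rw [H.fderiv]
  rw [ContinuousLinearMap.sum_apply]
  refine Finset.sum_congr rfl fun i _ => ?_
  simp only [ContinuousLinearMap.add_apply, ContinuousLinearMap.smul_apply, smul_eq_mul]
  ring


/-- For an `O(d,d)`-valued anchor `ρ`, the untwisted C-bracket of the
frame fields `(ê_M)^I := ρ^I{}_M` is a combination of frame fields with coefficients the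
DFT fluxes: `[[ê_M, ê_N]]^I = η^{PQ} T̂_{MNP} ρ^I{}_Q`. -/
theorem statement10 {d : ℕ} (ρ : DSpace d → DIdx d → DIdx d → ℝ)
    (hρs : ∀ K J : DIdx d, ContDiff ℝ (⊤ : ℕ∞) fun x => ρ x K J)
    (hη : ∀ (x : DSpace d) (K L : DIdx d),
      ∑ I, ∑ J, ρ x K I * eta I J * ρ x L J = eta K L)
    (M N I : DIdx d) (x : DSpace d) :
    cbC (fun y I' => ρ y I' M) (fun y I' => ρ y I' N) I x
      = ∑ P, ∑ Q, eta P Q * dftFlux ρ M N P x * ρ x I Q := by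
  have hdiff : ∀ (K J : DIdx d) (y : DSpace d), DifferentiableAt ℝ (fun z => ρ z K J) y :=
    fun K J y => ((hρs K J).differentiable (by simp)).differentiableAt
  have h1x : ∀ (y : DSpace d) (K L : DIdx d),
      ∑ I', ρ y K I' * ρ y L (Sum.swap I') = eta K L := by
    intro y K L
    rw [← hη y K L]
    refine Finset.sum_congr rfl fun I' _ => ?_
    rw [show (∑ J, ρ y K I' * eta I' J * ρ y L J)
        = ρ y K I' * ∑ J, eta I' J * ρ y L J from by
      rw [Finset.mul_sum]; exact Finset.sum_congr rfl fun J _ => by ring]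
    rw [sum_eta_mul]
  have h2x : ∀ (y : DSpace d) (a b : DIdx d),
      ∑ K, ρ y K a * ρ y (Sum.swap K) b = eta a b := by
    intro y a b
    have hmul : (Matrix.of fun K I' => ρ y K I')
        * (Matrix.of fun I' L => ρ y (Sum.swap L) (Sum.swap I')) = 1 := by
      ext K L
      rw [Matrix.mul_apply]
      simp only [Matrix.of_apply]
      rw [h1x y K (Sum.swap L), eta_swap_right, Matrix.one_apply]
    have hmul' := mul_eq_one_comm.mp hmul
    have h : ((Matrix.of fun I' L => ρ y (Sum.swap L) (Sum.swap I'))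
        * (Matrix.of fun K I' => ρ y K I')) (Sum.swap a) b
        = (1 : Matrix (DIdx d) (DIdx d) ℝ) (Sum.swap a) b := by rw [hmul']
    simp only [Matrix.mul_apply, Matrix.one_apply, Matrix.of_apply, Sum.swap_swap] at h
    rw [sum_swap (fun K => ρ y K a * ρ y (Sum.swap K) b)]
    simp only [Sum.swap_swap]
    rw [h, eta_eq]
    exact if_congr eq_comm rfl rfl
  have h3' : ∀ K L A, ∑ I', (pd (fun y => ρ y K I') A x * ρ x L (Sum.swap I')
      + ρ x K I' * pd (fun y => ρ y L (Sum.swap I')) A x) = 0 := by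
    intro K L A
    have hfg := pd_sum_mul (fun I' y => ρ y K I') (fun I' y => ρ y L (Sum.swap I')) x
      (fun i => hdiff K i x) (fun i => hdiff L (Sum.swap i) x) A
    rw [show (fun y => ∑ I', ρ y K I' * ρ y L (Sum.swap I')) = fun _ => eta K L from
      funext fun y => h1x y K L, pd_const] at hfg
    exact hfg.symm
  have h4' : ∀ a b A, ∑ K, (pd (fun y => ρ y K a) A x * ρ x (Sum.swap K) b
      + ρ x K a * pd (fun y => ρ y (Sum.swap K) b) A x) = 0 := by
    intro a b A
    have hfg := pd_sum_mul (fun K y => ρ y K a) (fun K y => ρ y (Sum.swap K) b) x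
      (fun i => hdiff i a x) (fun i => hdiff (Sum.swap i) b x) A
    rw [show (fun y => ∑ K, ρ y K a * ρ y (Sum.swap K) b) = fun _ => eta a b from
      funext fun y => h2x y a b, pd_const] at hfg
    exact hfg.symm
  have hkey := key (fun K J => ρ x K J) (fun K J A => pd (fun y => ρ y K J) A x)
    (fun K L => h1x x K L) (fun a b => h2x x a b) h3' h4' M N I
  have hlow : ∀ (b : DIdx d) (K : DIdx d), pdU (low (fun y I' => ρ y I' b) K) I x
      = pd (fun y => ρ y (Sum.swap K) b) (Sum.swap I) x := by
    intro b K
    have hl : low (fun y I' => ρ y I' b) K = fun y => ρ y (Sum.swap K) b :=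
      funext fun y => sum_eta_mul K fun J => ρ y J b
    rw [hl]
    exact sum_eta_mul I fun J => pd (fun y => ρ y (Sum.swap K) b) J x
  have hLHS : cbC (fun y I' => ρ y I' M) (fun y I' => ρ y I' N) I x
      = ∑ K, (ρ x K M * pd (fun y => ρ y I N) K x
          - 1/2 * ρ x K M * pd (fun y => ρ y (Sum.swap K) N) (Sum.swap I) x
          - ρ x K N * pd (fun y => ρ y I M) K x
          + 1/2 * ρ x K N * pd (fun y => ρ y (Sum.swap K) M) (Sum.swap I) x) := by
    simp only [cbC]
    refine Finset.sum_congr rfl fun K _ => ?_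
    rw [hlow N K, hlow M K]
  have hG : ∀ a b c : DIdx d,
      (∑ I', ∑ K, ∑ L, ∑ R, eta I' K * ρ x K a * pdU (fun y => ρ y L b) I' x
        * eta L R * ρ x R c)
      = Fq (fun K J => ρ x K J) (fun K J A => pd (fun y => ρ y K J) A x) a b c := by
    intro a b c
    have hpdU : ∀ (L I' : DIdx d), pdU (fun y => ρ y L b) I' x
        = pd (fun y => ρ y L b) (Sum.swap I') x :=
      fun L I' => sum_eta_mul I' fun J => pd (fun y => ρ y L b) J x
    calc (∑ I', ∑ K, ∑ L, ∑ R, eta I' K * ρ x K a * pdU (fun y => ρ y L b) I' x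
          * eta L R * ρ x R c)
        = ∑ I', ∑ K, ∑ L, eta I' K * (ρ x K a
            * (pd (fun y => ρ y L b) (Sum.swap I') x * ρ x (Sum.swap L) c)) := by
          refine Finset.sum_congr rfl fun I' _ => Finset.sum_congr rfl fun K _ =>
            Finset.sum_congr rfl fun L _ => ?_
          rw [show (∑ R, eta I' K * ρ x K a * pdU (fun y => ρ y L b) I' x * eta L R * ρ x R c)
              = (eta I' K * ρ x K a * pdU (fun y => ρ y L b) I' x)
                * ∑ R, eta L R * ρ x R c from by
            rw [Finset.mul_sum]; exact Finset.sum_congr rfl fun R _ => by ring]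
          rw [sum_eta_mul, hpdU L I']
          ring
      _ = ∑ I', ρ x (Sum.swap I') a
            * ∑ L, pd (fun y => ρ y L b) (Sum.swap I') x * ρ x (Sum.swap L) c := by
          refine Finset.sum_congr rfl fun I' _ => ?_
          rw [show (∑ K, ∑ L, eta I' K * (ρ x K a
                * (pd (fun y => ρ y L b) (Sum.swap I') x * ρ x (Sum.swap L) c)))
              = ∑ K, eta I' K * (ρ x K a
                * ∑ L, pd (fun y => ρ y L b) (Sum.swap I') x * ρ x (Sum.swap L) c) from
            Finset.sum_congr rfl fun K _ => by rw [← Finset.mul_sum, ← Finset.mul_sum]]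
          exact sum_eta_mul I' _
      _ = Fq (fun K J => ρ x K J) (fun K J A => pd (fun y => ρ y K J) A x) a b c := by
          exact sum_swap_reindex fun K => ρ x K a
            * ∑ L, pd (fun y => ρ y L b) K x * ρ x (Sum.swap L) c
  have hRHS : (∑ P, ∑ Q, eta P Q * dftFlux ρ M N P x * ρ x I Q)
      = ∑ P, ((1/2) * (Fq (fun K J => ρ x K J) (fun K J A => pd (fun y => ρ y K J) A x) M N P
          - Fq (fun K J => ρ x K J) (fun K J A => pd (fun y => ρ y K J) A x) M P N
          + Fq (fun K J => ρ x K J) (fun K J A => pd (fun y => ρ y K J) A x) N P M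
          - Fq (fun K J => ρ x K J) (fun K J A => pd (fun y => ρ y K J) A x) N M P
          + Fq (fun K J => ρ x K J) (fun K J A => pd (fun y => ρ y K J) A x) P M N
          - Fq (fun K J => ρ x K J) (fun K J A => pd (fun y => ρ y K J) A x) P N M))
        * ρ x I (Sum.swap P) := by
    refine Finset.sum_congr rfl fun P _ => ?_
    rw [show (∑ Q, eta P Q * dftFlux ρ M N P x * ρ x I Q)
        = dftFlux ρ M N P x * ρ x I (Sum.swap P) from by
      rw [show (∑ Q, eta P Q * dftFlux ρ M N P x * ρ x I Q)
          = ∑ Q, eta P Q * (dftFlux ρ M N P x * ρ x I Q) from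
        Finset.sum_congr rfl fun Q _ => mul_assoc _ _ _]
      exact sum_eta_mul P _]
    congr 1
    simp only [dftFlux, asym3]
    rw [hG M N P, hG M P N, hG N P M, hG N M P, hG P M N, hG P N M]
    ring
  rw [hLHS, hRHS]
  exact hkey
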